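/- Exton's generating relation (terminating/polynomial form): for real d, y, any sequence (A_m) of reals, and real x with |x| < 1, assuming all series converge absolutely, Σ_{n≥0} [(d)_n (d+1/2)_n / ((1/2)_n n!)] x^{2n} Σ_{m=0}^{n} A_m (−n)_m (−n+1/2)_m / m! · y^m = (1/2)(1+x)^{-2d} Σ_{n≥0} A_n (d)_n (d+1/2)_n / n! · (x² y/(1+x)²)^n + (1/2)(1−x)^{-2d} Σ_{n≥0} A_n (d)_n (d+1/2)_n / n! · (x² y/(1−x)²)^n. -/

import Mathlib

/-!
Both sides are finite combinations of the `A m`: the inner sum stops at `min n N` because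
`(-n)_m = 0` for `m > n`, so the order of summation may be swapped. For a fixed column `m`,
the duplication formula `(2a)_{2n} = 4^n (a)_n (a + 1/2)_n` gives
`(d)_n (d + 1/2)_n / ((1/2)_n n!) = (2d)_{2n} / (2n)!` and
`(-n)_m (-n + 1/2)_m = (2n)! / (4^m (2n - 2m)!)`. Writing `n = m + k`, the column becomes
`(d)_m (d + 1/2)_m / m! * (x^2 y)^m` times `∑ₖ (2d + 2m)_{2k} x^{2k} / (2k)!`, the even part of
the binomial series of `(1 - x)^{-(2d + 2m)}`, which is
`((1 - x)^{-(2d + 2m)} + (1 + x)^{-(2d + 2m)}) / 2`.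
-/

open Finset

/-- Pochhammer (rising factorial) for real `a`. -/
noncomputable def poch (a : ℝ) (n : ℕ) : ℝ := (ascPochhammer ℝ n).eval a

theorem HasSum.even_part {K : Type*} [Field K] [CharZero K] [TopologicalSpace K]
    [IsTopologicalRing K] {f : ℕ → K} {s t : K} (hs : HasSum f s)
    (ht : HasSum (fun n ↦ (-1) ^ n * f n) t) :
    HasSum (fun k ↦ f (2 * k)) ((s + t) / 2) := by
  have h := (hs.add ht).div_const 2
  rw [← (mul_right_injective₀ two_ne_zero).hasSum_iff] at h
  · refine h.congr_fun fun k ↦ ?_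
    simp only [Function.comp_apply, pow_mul, neg_one_sq, one_pow, one_mul]
    ring
  · intro n hn
    obtain ⟨k, rfl⟩ := (Nat.even_or_odd n).resolve_left fun ⟨k, hk⟩ ↦ hn ⟨k, by dsimp only; omega⟩
    simp [pow_succ, pow_mul]

lemma poch_succ (a : ℝ) (n : ℕ) : poch a (n + 1) = poch a n * (a + n) :=
  ascPochhammer_succ_eval n a

lemma poch_add (a : ℝ) (m n : ℕ) : poch a (m + n) = poch a m * poch (a + m) n := by
  simp [poch, ← ascPochhammer_mul, Polynomial.eval_comp]

lemma poch_one_eq_factorial (n : ℕ) : poch 1 n = n.factorial := by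
  simp [poch, ascPochhammer_eval_one]

lemma poch_neg_natCast (k m : ℕ) : poch (-(k : ℝ)) m = (-1) ^ m * k.descFactorial m := by
  rw [poch, ascPochhammer_eval_neg_eq_descPochhammer, descPochhammer_eval_eq_descFactorial]

lemma poch_neg_natCast_of_lt {k m : ℕ} (h : k < m) : poch (-(k : ℝ)) m = 0 := by
  simp [poch_neg_natCast, Nat.descFactorial_eq_zero_iff_lt.mpr h]

lemma poch_two_mul (a : ℝ) (n : ℕ) :
    poch (2 * a) (2 * n) = 4 ^ n * poch a n * poch (a + 1 / 2) n := by
  induction n with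
  | zero => simp [poch]
  | succ n ih =>
    rw [Nat.mul_succ, poch_succ, poch_succ, ih, poch_succ, poch_succ]
    push_cast
    ring

lemma poch_half_mul_factorial (n : ℕ) :
    poch (1 / 2) n * n.factorial = (2 * n).factorial / 4 ^ n := by
  have h := poch_two_mul (1 / 2) n
  rw [← poch_one_eq_factorial, ← poch_one_eq_factorial]
  field_simp
  norm_num at h ⊢
  linear_combination -h

lemma poch_neg_mul_poch_neg_add_half (m k : ℕ) :
    poch (-((m + k : ℕ) : ℝ)) m * poch (-((m + k : ℕ) : ℝ) + 1 / 2) m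
      = (2 * (m + k)).factorial / ((2 * k).factorial * 4 ^ m) := by
  have hdup := poch_two_mul (-((m + k : ℕ) : ℝ)) m
  rw [show 2 * -((m + k : ℕ) : ℝ) = -((2 * (m + k) : ℕ) : ℝ) by push_cast; ring,
    poch_neg_natCast, pow_mul, neg_one_sq, one_pow, one_mul] at hdup
  have hfac : ((2 * k).factorial : ℝ) * (2 * (m + k)).descFactorial (2 * m)
      = (2 * (m + k)).factorial := by
    rw [show 2 * k = 2 * (m + k) - 2 * m by omega]
    exact_mod_cast Nat.factorial_mul_descFactorial (by omega)
  rw [eq_div_iff (by positivity)]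
  linear_combination ((2 * k).factorial : ℝ) * hdup.symm + hfac

lemma poch_mul_poch_add_half_div (a : ℝ) (n : ℕ) :
    poch a n * poch (a + 1 / 2) n / (poch (1 / 2) n * n.factorial)
      = poch (2 * a) (2 * n) / (2 * n).factorial := by
  rw [poch_half_mul_factorial, poch_two_mul]
  field_simp

lemma exton_summand_add_eq_mul (d y x c : ℝ) (m k : ℕ) :
    poch d (k + m) * poch (d + 1 / 2) (k + m) / (poch (1 / 2) (k + m) * (k + m).factorial)
        * x ^ (2 * (k + m)) * (c * poch (-((k + m : ℕ) : ℝ)) m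
          * poch (-((k + m : ℕ) : ℝ) + 1 / 2) m / m.factorial * y ^ m)
      = c * poch d m * poch (d + 1 / 2) m / m.factorial * (x ^ 2 * y) ^ m
          * (poch (2 * d + 2 * m) (2 * k) * x ^ (2 * k) / (2 * k).factorial) := by
  rw [add_comm k m, mul_assoc c, poch_neg_mul_poch_neg_add_half, poch_mul_poch_add_half_div,
    mul_add, poch_add, poch_two_mul]
  push_cast
  field_simp
  ring

lemma factorial_mul_ringChoose (a : ℝ) (n : ℕ) :
    n.factorial * Ring.choose (a + n - 1) n = poch a n := by
  rw [← nsmul_eq_mul, ← Ring.descPochhammer_eq_factorial_smul_choose,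
    Polynomial.descPochhammer_smeval_eq_ascPochhammer, Polynomial.ascPochhammer_smeval_eq_eval,
    poch]
  ring_nf

lemma hasSum_poch_mul_pow_div_factorial (a : ℝ) {x : ℝ} (hx : |x| < 1) :
    HasSum (fun n ↦ poch a n * x ^ n / n.factorial) ((1 - x) ^ (-a)) := by
  have h := (Real.one_div_one_sub_rpow_hasFPowerSeriesOnBall_zero a).hasSum
    (y := x) (by simpa [Real.enorm_eq_ofReal_abs] using hx)
  rw [FormalMultilinearSeries.ofScalars_apply_eq', zero_add, one_div,
    ← Real.rpow_neg (by linarith [abs_lt.mp hx])] at h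
  refine h.congr_fun fun n ↦ ?_
  rw [← factorial_mul_ringChoose, smul_eq_mul]
  field_simp

lemma hasSum_poch_two_mul_mul_pow_div_factorial (a : ℝ) {x : ℝ} (hx : |x| < 1) :
    HasSum (fun k ↦ poch a (2 * k) * x ^ (2 * k) / (2 * k).factorial)
      (((1 - x) ^ (-a) + (1 + x) ^ (-a)) / 2) := by
  have hneg := hasSum_poch_mul_pow_div_factorial a (x := -x) (by rwa [abs_neg])
  rw [sub_neg_eq_add] at hneg
  refine (hasSum_poch_mul_pow_div_factorial a hx).even_part (hneg.congr_fun fun n ↦ ?_)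
  rw [neg_pow]
  ring

lemma rpow_neg_add_two_mul {b : ℝ} (hb : 0 < b) (a : ℝ) (m : ℕ) :
    b ^ (-(a + 2 * m)) = b ^ (-a) / (b ^ 2) ^ m := by
  rw [neg_add, Real.rpow_add hb, Real.rpow_neg hb.le (2 * m), ← pow_mul,
    show (2 * m : ℝ) = (2 * m : ℕ) by push_cast; ring, Real.rpow_natCast, div_eq_mul_inv]

lemma hasSum_exton_column (d y c : ℝ) {x : ℝ} (hx : |x| < 1) (m : ℕ) :
    HasSum (fun n : ℕ ↦ poch d n * poch (d + 1 / 2) n / (poch (1 / 2) n * n.factorial)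
        * x ^ (2 * n) * (c * poch (-(n : ℝ)) m * poch (-(n : ℝ) + 1 / 2) m / m.factorial * y ^ m))
      ((1 / 2) * (1 + x) ^ (-(2 * d))
          * (c * poch d m * poch (d + 1 / 2) m / m.factorial * (x ^ 2 * y / (1 + x) ^ 2) ^ m)
        + (1 / 2) * (1 - x) ^ (-(2 * d))
          * (c * poch d m * poch (d + 1 / 2) m / m.factorial * (x ^ 2 * y / (1 - x) ^ 2) ^ m)) := by
  obtain ⟨hx₁, hx₂⟩ := abs_lt.mp hx
  rw [← (add_left_injective m).hasSum_iff fun n hn ↦ by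
    rw [poch_neg_natCast_of_lt (not_le.mp fun h ↦ hn ⟨n - m, Nat.sub_add_cancel h⟩)]; ring]
  convert_to HasSum _ (c * poch d m * poch (d + 1 / 2) m / m.factorial * (x ^ 2 * y) ^ m
      * (((1 - x) ^ (-(2 * d + 2 * m)) + (1 + x) ^ (-(2 * d + 2 * m))) / 2)) using 1
  · rw [rpow_neg_add_two_mul (by linarith), rpow_neg_add_two_mul (by linarith),
      div_pow, div_pow]
    ring
  exact ((hasSum_poch_two_mul_mul_pow_div_factorial _ hx).mul_left _).congr_fun
    (exton_summand_add_eq_mul d y x c m)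

/-- Exton's generating relation (with `(A_m)` eventually zero to ensure convergence). -/
theorem stmt9 (d y : ℝ) (A : ℕ → ℝ) (hA : ∃ N, ∀ m, N ≤ m → A m = 0)
    (x : ℝ) (hx : |x| < 1) :
    ∑' n : ℕ, (poch d n * poch (d + 1/2) n / (poch (1/2) n * n.factorial)) * x ^ (2 * n)
        * ∑ m ∈ range (n + 1),
            A m * poch (-(n : ℝ)) m * poch (-(n : ℝ) + 1/2) m / m.factorial * y ^ m
      = (1/2) * (1 + x) ^ (-(2 * d))
          * ∑' n : ℕ, A n * poch d n * poch (d + 1/2) n / n.factorial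
              * (x ^ 2 * y / (1 + x) ^ 2) ^ n
        + (1/2) * (1 - x) ^ (-(2 * d))
          * ∑' n : ℕ, A n * poch d n * poch (d + 1/2) n / n.factorial
              * (x ^ 2 * y / (1 - x) ^ 2) ^ n := by
  obtain ⟨N, hN⟩ := hA
  have hA_out : ∀ m ∉ range N, A m = 0 := fun m hm ↦ hN m (not_lt.mp (mem_range.not.mp hm))
  have hinner (n : ℕ) : ∑ m ∈ range (n + 1),
        A m * poch (-(n : ℝ)) m * poch (-(n : ℝ) + 1/2) m / m.factorial * y ^ m
      = ∑ m ∈ range N, A m * poch (-(n : ℝ)) m * poch (-(n : ℝ) + 1/2) m / m.factorial * y ^ m := by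
    refine (sum_subset (range_subset_range.mpr (le_max_left _ N)) fun m _ hm ↦ ?_).trans
      (sum_subset (range_subset_range.mpr (le_max_right (n + 1) _)) fun m _ hm ↦ ?_).symm
    · rw [poch_neg_natCast_of_lt (by simpa [Nat.lt_succ_iff] using hm)]; ring
    · simp [hA_out m hm]
  refine (HasSum.tsum_eq ((hasSum_sum fun m (_ : m ∈ range N) ↦
    hasSum_exton_column d y (A m) hx m).congr_fun fun n ↦ by rw [hinner, mul_sum])).trans ?_
  rw [sum_add_distrib, ← mul_sum, ← mul_sum, tsum_eq_sum (s := range N) fun m hm ↦ by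
    simp [hA_out m hm], tsum_eq_sum (s := range N) fun m hm ↦ by simp [hA_out m hm]]
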